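/- Let ρ be a d×d complex positive semidefinite matrix with trace 1, let 0 < α < 1, and let U_1, …, U_N (N ≥ 2) be d×d unitary matrices. Then for each x ∈ {0, 1}: ∑_{s=1}^N I^α_ρ(U_s) ≥ (1/(2N − 2)) · [ ∑_{1 ≤ s < t ≤ N} I^α_ρ(U_s + (−1)^x U_t) + (2/(N(N − 1))) · (∑_{1 ≤ s < t ≤ N} √(I^α_ρ(U_s + (−1)^{x+1} U_t)))² ], where √ denotes the real square root. -/

import Mathlib

open Matrix Finset
open scoped ComplexOrder

/-- `ρ^α` via the continuous functional calculus applied to `t ↦ t ^ α`. -/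
noncomputable def mpow {d : ℕ} (ρ : Matrix (Fin d) (Fin d) ℂ) (α : ℝ) :
    Matrix (Fin d) (Fin d) ℂ :=
  cfc (fun t : ℝ => t ^ α) ρ

/-- The Wigner–Yanase–Dyson skew information
`I^α_ρ(K) = −(1/2) Tr([ρ^α, K†] [ρ^{1−α}, K])` of an arbitrary matrix `K`. -/
noncomputable def wyd {d : ℕ} (ρ : Matrix (Fin d) (Fin d) ℂ) (α : ℝ)
    (K : Matrix (Fin d) (Fin d) ℂ) : ℝ :=
  (-(1 / 2 : ℂ) *
    ((mpow ρ α * Kᴴ - Kᴴ * mpow ρ α) * (mpow ρ (1 - α) * K - K * mpow ρ (1 - α))).trace).re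

/-!
In an eigenbasis of `ρ` (eigenvalues `λᵢ ≥ 0`) the skew information is the sum
`½ ∑ᵢⱼ (λᵢ^α - λⱼ^α)(λᵢ^(1-α) - λⱼ^(1-α)) |Kⱼᵢ|²`, nonnegative because `t ↦ t^α` and
`t ↦ t^(1-α)` are both monotone. It is a real quadratic form in `K` with `I(εK) = I(K)` for
`|ε| = 1`, so the parallelogram law summed over the pairs `s < t` gives
`∑ (I(Uₛ + εUₜ) + I(Uₛ - εUₜ)) = (2N - 2) ∑ I(Uₛ)`, and Cauchy–Schwarz over the `N(N-1)/2`
pairs bounds the second sum from below by `2/(N(N-1)) (∑ √I(Uₛ - εUₜ))²`.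
-/

section
variable {n : Type*} [Fintype n] [DecidableEq n]

lemma Matrix.commutator_diagonal_apply (a : n → ℂ) (M : Matrix n n ℂ) (i j : n) :
    (diagonal a * M - M * diagonal a) i j = (a i - a j) * M i j := by
  rw [sub_apply, diagonal_mul, mul_diagonal, sub_mul, mul_comm (M i j)]

lemma Matrix.trace_commutator_mul_commutator_diagonal (a b : n → ℝ) (M : Matrix n n ℂ) :
    ((diagonal (fun i => (a i : ℂ)) * Mᴴ - Mᴴ * diagonal (fun i => (a i : ℂ))) *
        (diagonal (fun i => (b i : ℂ)) * M - M * diagonal (fun i => (b i : ℂ)))).trace =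
      -((∑ i, ∑ j, (a i - a j) * (b i - b j) * Complex.normSq (M j i) : ℝ) : ℂ) := by
  push_cast
  simp only [trace, diag_apply, mul_apply, commutator_diagonal_apply, conjTranspose_apply,
    ← Finset.sum_neg_distrib]
  refine Finset.sum_congr rfl fun i _ => Finset.sum_congr rfl fun j _ => ?_
  rw [Complex.normSq_eq_conj_mul_self, Complex.star_def]
  ring

open Unitary in
lemma Matrix.trace_conjStarAlgAut (u : unitary (Matrix n n ℂ)) (X : Matrix n n ℂ) :
    (conjStarAlgAut ℂ _ u X).trace = X.trace := by
  rw [conjStarAlgAut_apply, trace_mul_cycle, coe_star_mul_self, Matrix.one_mul]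

end

lemma Finset.sum_filter_lt_add {ι M : Type*} [Fintype ι] [LinearOrder ι] [AddCommMonoid M]
    (f : ι → M) :
    ∑ p ∈ univ.filter (fun p : ι × ι => p.1 < p.2), (f p.1 + f p.2) =
      (Fintype.card ι - 1) • ∑ i, f i := by
  have hswap : ∑ p ∈ univ.filter (fun p : ι × ι => p.1 < p.2), f p.2 =
      ∑ p ∈ univ.filter (fun p : ι × ι => p.2 < p.1), f p.1 :=
    Finset.sum_nbij' Prod.swap Prod.swap (by simp) (by simp) (by simp) (by simp) (by simp)
  have hunion : univ.filter (fun p : ι × ι => p.1 < p.2) ∪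
      univ.filter (fun p : ι × ι => p.2 < p.1) = univ.filter (fun p : ι × ι => p.1 ≠ p.2) := by
    ext p
    simp only [mem_union, mem_filter, mem_univ, true_and]
    exact lt_or_lt_iff_ne
  rw [Finset.sum_add_distrib, hswap, ← Finset.sum_union, hunion, ← univ_product_univ,
    Finset.sum_filter, Finset.sum_product, Finset.smul_sum]
  · refine Finset.sum_congr rfl fun i _ => ?_
    rw [← Finset.sum_filter, Finset.filter_ne]
    simp only [Finset.sum_const, card_erase_of_mem (mem_univ i), card_univ]
  · exact Finset.disjoint_filter.2 fun p _ h => h.asymm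

lemma Finset.card_filter_fst_lt_snd (N : ℕ) :
    (#(univ.filter (fun p : Fin N × Fin N => p.1 < p.2)) : ℝ) = N * (N - 1) / 2 := by
  rw [← univ_product_univ, card_product_filter_lt, card_fin, Nat.cast_choose_two]

lemma Real.sq_sum_sqrt_le_card_mul_sum {ι : Type*} (s : Finset ι) {f : ι → ℝ}
    (hf : ∀ i ∈ s, 0 ≤ f i) : (∑ i ∈ s, √(f i)) ^ 2 ≤ #s * ∑ i ∈ s, f i := by
  refine sq_sum_le_card_mul_sum_sq.trans_eq ?_
  rw [sum_congr rfl fun i hi => Real.sq_sqrt (hf i hi)]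

section
variable {d : ℕ}

open Unitary in
lemma wyd_eq_sum_eigenvalues {ρ : Matrix (Fin d) (Fin d) ℂ} (hρ : ρ.IsHermitian) (α : ℝ)
    (K : Matrix (Fin d) (Fin d) ℂ) :
    wyd ρ α K = 1 / 2 * ∑ i, ∑ j,
      (hρ.eigenvalues i ^ α - hρ.eigenvalues j ^ α) *
        (hρ.eigenvalues i ^ (1 - α) - hρ.eigenvalues j ^ (1 - α)) *
        Complex.normSq ((conjStarAlgAut ℂ _ hρ.eigenvectorUnitary).symm K j i) := by
  set φ := conjStarAlgAut ℂ _ hρ.eigenvectorUnitary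
  set M := φ.symm K
  have hK : K = φ M := (φ.apply_symm_apply K).symm
  have hpow (β : ℝ) : mpow ρ β = φ (diagonal fun i => ((hρ.eigenvalues i ^ β : ℝ) : ℂ)) :=
    hρ.cfc_eq _
  rw [wyd, hpow, hpow, hK, ← star_eq_conjTranspose, ← map_star, ← map_mul, ← map_mul,
    ← map_mul, ← map_mul, ← map_sub, ← map_sub, ← map_mul, trace_conjStarAlgAut,
    star_eq_conjTranspose, trace_commutator_mul_commutator_diagonal, neg_mul_neg,
    show (1 / 2 : ℂ) = ((1 / 2 : ℝ) : ℂ) by norm_num, ← Complex.ofReal_mul, Complex.ofReal_re]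

lemma wyd_nonneg {ρ : Matrix (Fin d) (Fin d) ℂ} (hρ : ρ.PosSemidef) {α : ℝ} (hα0 : 0 ≤ α)
    (hα1 : α ≤ 1) (K : Matrix (Fin d) (Fin d) ℂ) : 0 ≤ wyd ρ α K := by
  have hmono : MonovaryOn (· ^ α) (· ^ (1 - α)) (Set.Ici (0 : ℝ)) :=
    (Real.monotoneOn_rpow_Ici_of_exponent_nonneg hα0).monovaryOn
      (Real.monotoneOn_rpow_Ici_of_exponent_nonneg (sub_nonneg.2 hα1))
  rw [wyd_eq_sum_eigenvalues hρ.isHermitian]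
  refine mul_nonneg (by norm_num) (sum_nonneg fun i _ => sum_nonneg fun j _ => ?_)
  exact mul_nonneg (hmono.sub_mul_sub_nonneg (hρ.eigenvalues_nonneg j) (hρ.eigenvalues_nonneg i))
    (Complex.normSq_nonneg _)

lemma wyd_smul (ρ : Matrix (Fin d) (Fin d) ℂ) (α : ℝ) (c : ℂ) (K : Matrix (Fin d) (Fin d) ℂ) :
    wyd ρ α (c • K) = Complex.normSq c * wyd ρ α K := by
  simp only [wyd, conjTranspose_smul, Matrix.mul_smul, Matrix.smul_mul, ← smul_sub, smul_smul,
    trace_smul, smul_eq_mul]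
  rw [Complex.star_def, Complex.mul_conj, mul_left_comm, Complex.re_ofReal_mul]

lemma wyd_add_add_wyd_sub (ρ : Matrix (Fin d) (Fin d) ℂ) (α : ℝ)
    (A B : Matrix (Fin d) (Fin d) ℂ) :
    wyd ρ α (A + B) + wyd ρ α (A - B) = 2 * wyd ρ α A + 2 * wyd ρ α B := by
  set P := mpow ρ α
  set Q := mpow ρ (1 - α)
  have key : (P * (A + B)ᴴ - (A + B)ᴴ * P) * (Q * (A + B) - (A + B) * Q)
      + (P * (A - B)ᴴ - (A - B)ᴴ * P) * (Q * (A - B) - (A - B) * Q)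
      = (2 : ℝ) • ((P * Aᴴ - Aᴴ * P) * (Q * A - A * Q))
        + (2 : ℝ) • ((P * Bᴴ - Bᴴ * P) * (Q * B - B * Q)) := by
    simp only [conjTranspose_add, conjTranspose_sub, two_smul]
    noncomm_ring
  rw [wyd, wyd, wyd, wyd, ← Complex.add_re, ← mul_add, ← trace_add, key, trace_add, trace_smul,
    trace_smul, mul_add, mul_smul_comm, mul_smul_comm, Complex.add_re, Complex.smul_re,
    Complex.smul_re, smul_eq_mul, smul_eq_mul]

end

theorem unitary_uncertainty_Lb3_general (d N : ℕ) (hN : 2 ≤ N)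
    (ρ : Matrix (Fin d) (Fin d) ℂ) (hρ : ρ.PosSemidef)
    (α : ℝ) (hα0 : 0 < α) (hα1 : α < 1)
    (U : Fin N → Matrix (Fin d) (Fin d) ℂ) :
    ∀ x ∈ ({0, 1} : Set ℕ),
      ∑ s, wyd ρ α (U s) ≥
        (1 / (2 * (N : ℝ) - 2)) *
          ((∑ p ∈ univ.filter (fun p : Fin N × Fin N => p.1 < p.2),
              wyd ρ α (U p.1 + ((-1 : ℂ) ^ x) • U p.2)) +
            (2 / ((N : ℝ) * ((N : ℝ) - 1))) *
              (∑ p ∈ univ.filter (fun p : Fin N × Fin N => p.1 < p.2),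
                Real.sqrt (wyd ρ α (U p.1 + ((-1 : ℂ) ^ (x + 1)) • U p.2))) ^ 2) := by
  intro x _
  set P := univ.filter (fun p : Fin N × Fin N => p.1 < p.2)
  set ε : ℂ := (-1) ^ x
  have hε : Complex.normSq ε = 1 := by simp [ε]
  have hsign (A B : Matrix (Fin d) (Fin d) ℂ) : A + (-1 : ℂ) ^ (x + 1) • B = A - ε • B := by
    rw [pow_succ, mul_neg_one, neg_smul, sub_eq_add_neg]
  simp only [hsign]
  set B := ∑ p ∈ P, wyd ρ α (U p.1 - ε • U p.2)
  have hN' : (2 : ℝ) ≤ N := by exact_mod_cast hN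
  have hpairs : ∑ p ∈ P, wyd ρ α (U p.1 + ε • U p.2) + B = (2 * N - 2) * ∑ s, wyd ρ α (U s) := by
    rw [← sum_add_distrib]
    simp only [wyd_add_add_wyd_sub, wyd_smul, hε, one_mul]
    rw [sum_filter_lt_add (fun s => 2 * wyd ρ α (U s)), nsmul_eq_mul, Fintype.card_fin,
      Nat.cast_pred (by omega), ← mul_sum]
    ring
  set T := ∑ p ∈ P, √(wyd ρ α (U p.1 - ε • U p.2))
  have hcs : T ^ 2 ≤ #P * B :=
    Real.sq_sum_sqrt_le_card_mul_sum P fun _ _ => wyd_nonneg hρ hα0.le hα1.le _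
  have hT : 2 / (N * (N - 1)) * T ^ 2 ≤ B := by
    have hN1 : (0 : ℝ) < N - 1 := by linarith
    calc 2 / (N * (N - 1)) * T ^ 2 ≤ 2 / (N * (N - 1)) * (N * (N - 1) / 2 * B) := by
          gcongr
          rwa [← card_filter_fst_lt_snd]
      _ = B := by field_simp [hN1.ne']
  rw [ge_iff_le, one_div_mul_eq_div, div_le_iff₀ (by linarith)]
  linarith

theorem unitary_uncertainty_Lb3 (d N : ℕ) (hN : 2 ≤ N)
    (ρ : Matrix (Fin d) (Fin d) ℂ) (hρ : ρ.PosSemidef) (hTr : ρ.trace = 1)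
    (α : ℝ) (hα0 : 0 < α) (hα1 : α < 1)
    (U : Fin N → Matrix (Fin d) (Fin d) ℂ)
    (hU : ∀ s, U s ∈ Matrix.unitaryGroup (Fin d) ℂ) :
    ∀ x ∈ ({0, 1} : Set ℕ),
      ∑ s, wyd ρ α (U s) ≥
        (1 / (2 * (N : ℝ) - 2)) *
          ((∑ p ∈ univ.filter (fun p : Fin N × Fin N => p.1 < p.2),
              wyd ρ α (U p.1 + ((-1 : ℂ) ^ x) • U p.2)) +
            (2 / ((N : ℝ) * ((N : ℝ) - 1))) *
              (∑ p ∈ univ.filter (fun p : Fin N × Fin N => p.1 < p.2),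
                Real.sqrt (wyd ρ α (U p.1 + ((-1 : ℂ) ^ (x + 1)) • U p.2))) ^ 2) :=
  unitary_uncertainty_Lb3_general d N hN ρ hρ α hα0 hα1 U
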